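/- Let H be a bipartite multigraph with parts X = {x_1,...,x_k} and Z = {z_1,...,z_n}, encoded by its bipartite adjacency matrix A where a_{ij} is the number of parallel edges joining x_i and z_j, and let d_i = a_{i1} + ... + a_{in} be the degree of x_i. Suppose H admits a sequential coloring for X, i.e., there are finite sets S_{ij} ⊆ {1,2,3,...} with |S_{ij}| = a_{ij} such that for each fixed j the sets S_{1j},...,S_{kj} are pairwise disjoint and for each fixed i the sets S_{i1},...,S_{in} are pairwise disjoint with union exactly {1,...,d_i}. Then for every assignment of finite sets L_1,...,L_k ⊆ {1,2,3,...} with |L_i| = d_i, there are finite sets T_{ij} ⊆ L_i with |T_{ij}| = a_{ij} such that for each fixed i the sets T_{i1},...,T_{in} are pairwise disjoint and for each fixed j the sets T_{1j},...,T_{kj} are pairwise disjoint. -/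

import Mathlib

/-!
Induction on the total weight `∑ᵢ ∑_{v ∈ Lᵢ} v` of the lists. If every list is `{1, …, dᵢ}`,
the sequential colouring itself is a colouring from the lists. Otherwise some list contains
`p + 1` but not `p > 0`; replacing `p + 1` by `p` in every such list lowers the weight, so the
new lists admit a colouring. It is lifted back by exchanging `p` and `p + 1` in the modified
rows and along the `(p, p + 1)`-Kempe chains leaving them.
-/

open Finset

/-- The degree in the bipartite edge set `E` of a vertex `x` of the part `X = Fin k`. -/
def Xdeg {k m : ℕ} (E : Finset (Fin k × Fin m)) (x : Fin k) : ℕ :=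
  (E.filter fun e => e.1 = x).card

/-- The degree in the bipartite edge set `E` of a vertex `y` of the part `Y = Fin m`. -/
def Ydeg {k m : ℕ} (E : Finset (Fin k × Fin m)) (y : Fin m) : ℕ :=
  (E.filter fun e => e.2 = y).card

/-- A star forest with centers in `X`: every vertex of `Y` has degree at most one. -/
def IsStarForest {k m : ℕ} (F : Finset (Fin k × Fin m)) : Prop :=
  ∀ y : Fin m, Ydeg F y ≤ 1

/-- The simple graph on the vertex set `Fin k ⊕ Fin m` determined by a set of
bipartite edges. -/
def toGraph {k m : ℕ} (F : Finset (Fin k × Fin m)) : SimpleGraph (Fin k ⊕ Fin m) where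
  Adj u v := (∃ x y, u = Sum.inl x ∧ v = Sum.inr y ∧ (x, y) ∈ F) ∨
             (∃ x y, v = Sum.inl x ∧ u = Sum.inr y ∧ (x, y) ∈ F)
  symm := ⟨fun _ _ h => Or.symm h⟩
  loopless := by
    exact ⟨by rintro u (⟨x, y, rfl, h, -⟩ | ⟨x, y, rfl, h, -⟩) <;> exact Sum.inl_ne_inr h⟩

/-- `F` is isomorphic to a subgraph of `F'`: there is an injective map of vertices
carrying edges to edges. -/
def IsoToSubgraph {k m k' m' : ℕ} (F : Finset (Fin k × Fin m))
    (F' : Finset (Fin k' × Fin m')) : Prop :=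
  ∃ f : Fin k ⊕ Fin m → Fin k' ⊕ Fin m',
    Function.Injective f ∧ ∀ u v, (toGraph F).Adj u v → (toGraph F').Adj (f u) (f v)

/-- `c ⪯ c'` : after reordering the components of each vector in nondecreasing order,
each component of `c` is at most the corresponding component of `c'`. -/
def Prec {k : ℕ} (c c' : Fin k → ℕ) : Prop :=
  ∀ i : Fin k, c (Tuple.sort c i) ≤ c' (Tuple.sort c' i)

/-- A star-forest ascending subgraph decomposition of the edge set `E`:
the `F i` partition `E`, `F i` has `i + 1` edges (`1`-based: `i` edges),
every `F i` is a star forest with centers in `X`, and each `F i` is isomorphic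
to a subgraph of the next one. -/
def StarForestASD {k m n : ℕ} (E : Finset (Fin k × Fin m))
    (F : Fin n → Finset (Fin k × Fin m)) : Prop :=
  (∀ i j, i ≠ j → Disjoint (F i) (F j)) ∧
  Finset.univ.biUnion F = E ∧
  (∀ i, (F i).card = (i : ℕ) + 1) ∧
  (∀ i, IsStarForest (F i)) ∧
  ∀ j : ℕ, (h : j + 1 < n) → IsoToSubgraph (F ⟨j, Nat.lt_of_succ_lt h⟩) (F ⟨j + 1, h⟩)

/-- The reduced bipartite graph with (1-based) degree sequence `d 1 ≤ ⋯ ≤ d k`: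
`x i` is adjacent exactly to `y 1, …, y (d i)`. -/
def reducedEdges (k : ℕ) (d : ℕ → ℕ) : Finset (Fin k × Fin (d k)) :=
  Finset.univ.filter fun e => (e.2 : ℕ) + 1 ≤ d ((e.1 : ℕ) + 1)

/-- The columns of `A` satisfy `A_1 ⪯ A_2 ⪯ ⋯ ⪯ A_n`. -/
def AscendingCols {k n : ℕ} (A : Matrix (Fin k) (Fin n) ℕ) : Prop :=
  ∀ j : ℕ, (h : j + 1 < n) →
    Prec (fun i => A i ⟨j, Nat.lt_of_succ_lt h⟩) (fun i => A i ⟨j + 1, h⟩)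

/-- A sequential coloring of the bipartite multigraph encoded by the matrix `A`:
the parallel edge class joining `x i` and `z j` receives the set `S i j` of colors,
the coloring is proper, and the edges at `x i` receive exactly colors `{1, …, d i}`. -/
def SeqColoring {k n : ℕ} (A : Matrix (Fin k) (Fin n) ℕ) (d : Fin k → ℕ)
    (S : Fin k → Fin n → Finset ℕ) : Prop :=
  (∀ i j, (S i j).card = A i j) ∧
  (∀ j : Fin n, ∀ i i' : Fin k, i ≠ i' → Disjoint (S i j) (S i' j)) ∧
  (∀ i : Fin k, ∀ j j' : Fin n, j ≠ j' → Disjoint (S i j) (S i j')) ∧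
  (∀ i : Fin k, Finset.univ.biUnion (fun j => S i j) = Finset.Icc 1 (d i))

structure IsListColoring {k n : ℕ} (A : Matrix (Fin k) (Fin n) ℕ) (L : Fin k → Finset ℕ)
    (T : Fin k → Fin n → Finset ℕ) : Prop where
  subset_list : ∀ i j, T i j ⊆ L i
  card_eq : ∀ i j, (T i j).card = A i j
  disjoint_row : ∀ i : Fin k, ∀ j j' : Fin n, j ≠ j' → Disjoint (T i j) (T i j')
  disjoint_col : ∀ j : Fin n, ∀ i i' : Fin k, i ≠ i' → Disjoint (T i j) (T i' j)

theorem SeqColoring.isListColoring {k n : ℕ} {A : Matrix (Fin k) (Fin n) ℕ} {d : Fin k → ℕ}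
    {S : Fin k → Fin n → Finset ℕ} (hS : SeqColoring A d S) :
    IsListColoring A (fun i => Icc 1 (d i)) S where
  subset_list i j := hS.2.2.2 i ▸ subset_biUnion_of_mem _ (mem_univ j)
  card_eq := hS.1
  disjoint_row := hS.2.2.1
  disjoint_col := hS.2.1

theorem exists_gap_of_ne_Icc {Λ : Finset ℕ} (h0 : 0 ∉ Λ) (hne : Λ ≠ Icc 1 Λ.card) :
    ∃ p, 0 < p ∧ p ∉ Λ ∧ p + 1 ∈ Λ := by
  by_contra! hgap
  have hdown : ∀ m, m + 1 ∈ Λ → Icc 1 (m + 1) ⊆ Λ := by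
    intro m
    induction m with
    | zero => simp
    | succ m ih =>
      intro hm v hv
      rcases (mem_Icc.1 hv).2.eq_or_lt with rfl | hlt
      · exact hm
      · have hm' : m + 1 ∈ Λ := by_contra fun h => hgap (m + 1) m.succ_pos h hm
        exact ih hm' (mem_Icc.2 ⟨(mem_Icc.1 hv).1, by omega⟩)
  have hsub : Λ ⊆ Icc 1 Λ.card := by
    intro v hv
    obtain ⟨m, rfl⟩ := Nat.exists_eq_add_of_lt (Nat.pos_of_ne_zero fun h => h0 (h ▸ hv))
    have := card_le_card (hdown m (by simpa using hv))
    simp only [Nat.card_Icc] at this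
    exact mem_Icc.2 ⟨by omega, by omega⟩
  exact hne (eq_of_subset_of_card_le hsub (by simp))

namespace Finset

variable {α : Type*} [DecidableEq α] {a b : α}

theorem mem_map_swap {s : Finset α} {w : α} :
    w ∈ s.map (Equiv.swap a b).toEmbedding ↔ Equiv.swap a b w ∈ s := by
  rw [mem_map_equiv, Equiv.symm_swap]

theorem map_swap_eq_self {s : Finset α} (ha : a ∈ s) (hb : b ∈ s) :
    s.map (Equiv.swap a b).toEmbedding = s := by
  ext w
  rw [mem_map_swap]
  rcases eq_or_ne w a with rfl | hwa
  · simp [ha, hb]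
  rcases eq_or_ne w b with rfl | hwb
  · simp [ha, hb]
  · rw [Equiv.swap_apply_of_ne_of_ne hwa hwb]

theorem map_swap_map_swap (s : Finset α) :
    (s.map (Equiv.swap a b).toEmbedding).map (Equiv.swap a b).toEmbedding = s := by
  ext w
  simp only [mem_map_swap, Equiv.swap_apply_self]

theorem sum_map_swap_lt {s : Finset ℕ} {p u : ℕ} (hp : p ∉ s) (hu : u ∈ s) (hpu : p < u) :
    ∑ v ∈ s.map (Equiv.swap p u).toEmbedding, v < ∑ v ∈ s, v := by
  rw [sum_map]
  refine sum_lt_sum (fun v hv => ?_) ⟨u, hu, by simpa using hpu⟩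
  rcases eq_or_ne v p with rfl | hvp
  · exact absurd hv hp
  rcases eq_or_ne v u with rfl | hvu
  · simpa using hpu.le
  · simp [Equiv.swap_apply_of_ne_of_ne hvp hvu]

end Finset

section KempeChains

open scoped Classical

variable {k n : ℕ} {A : Matrix (Fin k) (Fin n) ℕ} {L : Fin k → Finset ℕ}
  {T : Fin k → Fin n → Finset ℕ} {p u : ℕ}

/-- Rows `x` and `y` are consecutive on a `(p, u)`-Kempe chain. -/
def KempeStep (T : Fin k → Fin n → Finset ℕ) (p u : ℕ) (x y : Fin k) : Prop :=
  ∃ j, p ∈ T x j ∧ u ∈ T y j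

noncomputable def kempeSwap (T : Fin k → Fin n → Finset ℕ) (C : Set (Fin k)) (p u : ℕ) :
    Fin k → Fin n → Finset ℕ :=
  fun i j => if i ∈ C then (T i j).map (Equiv.swap p u).toEmbedding else T i j

theorem IsListColoring.kempeSwap (hT : IsListColoring A L T) {C : Set (Fin k)}
    (hfwd : ∀ x y, x ∈ C → KempeStep T p u x y → y ∈ C)
    (hbwd : ∀ x y, y ∈ C → KempeStep T p u x y → x ∈ C) :
    IsListColoring A (fun i => if i ∈ C then (L i).map (Equiv.swap p u).toEmbedding else L i)
      (kempeSwap T C p u) := by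
  have hcol : ∀ j i i', i ∈ C → i' ∉ C →
      Disjoint ((T i j).map (Equiv.swap p u).toEmbedding) (T i' j) := by
    intro j i i' hi hi'
    refine disjoint_left.2 fun w hw hw' => ?_
    rw [mem_map_swap] at hw
    rcases eq_or_ne w p with rfl | hwp
    · exact hi' (hbwd i' i hi ⟨j, hw', by rwa [Equiv.swap_apply_left] at hw⟩)
    rcases eq_or_ne w u with rfl | hwu
    · exact hi' (hfwd i i' hi ⟨j, by rwa [Equiv.swap_apply_right] at hw, hw'⟩)
    rw [Equiv.swap_apply_of_ne_of_ne hwp hwu] at hw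
    exact disjoint_left.1 (hT.disjoint_col j i i' (fun h => hi' (h ▸ hi))) hw hw'
  refine ⟨fun i j => ?_, fun i j => ?_, fun i j j' hj => ?_, fun j i i' hi => ?_⟩ <;>
    simp only [_root_.kempeSwap]
  · split_ifs
    · exact map_subset_map.2 (hT.subset_list i j)
    · exact hT.subset_list i j
  · split_ifs
    · rw [card_map, hT.card_eq]
    · exact hT.card_eq i j
  · split_ifs
    · exact (disjoint_map _).2 (hT.disjoint_row i j j' hj)
    · exact hT.disjoint_row i j j' hj
  · split_ifs with h h' h'
    · exact (disjoint_map _).2 (hT.disjoint_col j i i' hi)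
    · exact hcol j i i' h h'
    · exact (hcol j i' i h' h).symm
    · exact hT.disjoint_col j i i' hi

theorem KempeStep.left_unique (hT : IsListColoring A L T) {x x' y : Fin k}
    (h : KempeStep T p u x y) (h' : KempeStep T p u x' y) : x = x' := by
  obtain ⟨j, hpx, huy⟩ := h
  obtain ⟨j', hpx', huy'⟩ := h'
  obtain rfl : j = j' := by
    by_contra hj
    exact disjoint_left.1 (hT.disjoint_row y j j' hj) huy huy'
  by_contra hx
  exact disjoint_left.1 (hT.disjoint_col j x x' hx) hpx hpx'

/-- The rows reachable from `R` by Kempe steps have both colours in their lists (by `hRc`), and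
each of them has its unique Kempe predecessor in `R` or among them, so `R` together with these
rows is closed under Kempe steps in both directions. -/
theorem IsListColoring.exists_of_swap_lists (hT : IsListColoring A L T) (R : Set (Fin k))
    (hR : ∀ i ∈ R, p ∈ L i ∧ u ∉ L i) (hRc : ∀ i ∉ R, u ∈ L i → p ∈ L i) :
    ∃ T', IsListColoring A
      (fun i => if i ∈ R then (L i).map (Equiv.swap p u).toEmbedding else L i) T' := by
  set chain : Set (Fin k) := {y | ∃ x ∈ R, Relation.TransGen (KempeStep T p u) x y}
  have chain_pred : ∀ y ∈ chain, ∃ x, (x ∈ R ∨ x ∈ chain) ∧ KempeStep T p u x y := by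
    rintro y ⟨x, hx, hxy⟩
    induction hxy with
    | single h => exact ⟨x, .inl hx, h⟩
    | tail hxz hzy _ => exact ⟨_, .inr ⟨x, hx, hxz⟩, hzy⟩
  have mem_chain : ∀ y ∈ chain, u ∈ L y ∧ p ∈ L y := by
    intro y hy
    obtain ⟨_, _, j, -, huy⟩ := chain_pred y hy
    have hu := hT.subset_list y j huy
    exact ⟨hu, hRc y (fun h => (hR y h).2 hu) hu⟩
  have hswap := hT.kempeSwap (C := R ∪ chain)
    (by
      rintro x y (hx | ⟨x₀, hx₀, hx₀x⟩) hxy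
      · exact .inr ⟨x, hx, .single hxy⟩
      · exact .inr ⟨x₀, hx₀, hx₀x.tail hxy⟩)
    (by
      rintro x y (hy | hy) hxy
      · obtain ⟨j, -, huy⟩ := hxy
        exact absurd (hT.subset_list y j huy) (hR y hy).2
      · obtain ⟨z, hz, hzy⟩ := chain_pred y hy
        exact KempeStep.left_unique hT hzy hxy ▸ hz)
  refine ⟨_root_.kempeSwap T (R ∪ chain) p u, ?_⟩
  convert hswap using 2 with i
  by_cases hi : i ∈ R
  · simp [hi]
  by_cases hic : i ∈ chain
  · obtain ⟨hu, hp⟩ := mem_chain i hic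
    simp [hi, hic, map_swap_eq_self hp hu]
  · simp [hi, hic]

noncomputable def lowerGap (L : Fin k → Finset ℕ) (p : ℕ) : Fin k → Finset ℕ :=
  fun i => if p + 1 ∈ L i ∧ p ∉ L i then (L i).map (Equiv.swap p (p + 1)).toEmbedding else L i

theorem card_lowerGap (i : Fin k) : (lowerGap L p i).card = (L i).card := by
  unfold lowerGap
  split_ifs <;> simp

theorem zero_notMem_lowerGap {i : Fin k} (hp : 0 < p) (h0 : 0 ∉ L i) : 0 ∉ lowerGap L p i := by
  unfold lowerGap
  split_ifs
  · rwa [mem_map_swap, Equiv.swap_apply_of_ne_of_ne hp.ne (by omega)]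
  · exact h0

theorem sum_lowerGap_lt {i₀ : Fin k} (hp : p ∉ L i₀) (hu : p + 1 ∈ L i₀) :
    ∑ i, ∑ v ∈ lowerGap L p i, v < ∑ i, ∑ v ∈ L i, v := by
  refine sum_lt_sum (fun i _ => ?_) ⟨i₀, mem_univ _, ?_⟩ <;> unfold lowerGap
  · split_ifs with h
    · exact (sum_map_swap_lt h.2 h.1 p.lt_succ_self).le
    · exact le_rfl
  · rw [if_pos ⟨hu, hp⟩]
    exact sum_map_swap_lt hp hu p.lt_succ_self

theorem IsListColoring.exists_of_lowerGap (hT : IsListColoring A (lowerGap L p) T) :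
    ∃ T', IsListColoring A L T' := by
  set R : Set (Fin k) := {i | p + 1 ∈ L i ∧ p ∉ L i}
  have hR : ∀ i ∈ R, p ∈ lowerGap L p i ∧ p + 1 ∉ lowerGap L p i := by
    intro i hi
    simp [lowerGap, hi.1, hi.2]
  have hRc : ∀ i ∉ R, p + 1 ∈ lowerGap L p i → p ∈ lowerGap L p i := by
    intro i hi
    rw [lowerGap, if_neg (show ¬(p + 1 ∈ L i ∧ p ∉ L i) from hi)]
    exact not_imp_not.1 fun hp hu => hi ⟨hu, hp⟩
  obtain ⟨T', hT'⟩ := hT.exists_of_swap_lists R hR hRc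
  refine ⟨T', ?_⟩
  convert hT' using 2 with i
  by_cases hi : p + 1 ∈ L i ∧ p ∉ L i
  · simp [R, lowerGap, hi, map_swap_map_swap]
  · simp [R, lowerGap, hi]

end KempeChains

theorem SeqColoring.exists_isListColoring {k n : ℕ} {A : Matrix (Fin k) (Fin n) ℕ}
    {d : Fin k → ℕ} {S : Fin k → Fin n → Finset ℕ} (hS : SeqColoring A d S)
    (L : Fin k → Finset ℕ) (h0 : ∀ i, 0 ∉ L i) (hcard : ∀ i, (L i).card = d i) :
    ∃ T, IsListColoring A L T := by
  induction hN : ∑ i, ∑ v ∈ L i, v using Nat.strong_induction_on generalizing L with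
  | _ N ih =>
  by_cases hinit : ∀ i, L i = Icc 1 (d i)
  · exact ⟨S, (funext hinit : L = _) ▸ hS.isListColoring⟩
  obtain ⟨i₀, hi₀⟩ := not_forall.1 hinit
  obtain ⟨p, hp0, hp, hu⟩ := exists_gap_of_ne_Icc (h0 i₀) (hcard i₀ ▸ hi₀)
  obtain ⟨T, hT⟩ := ih _ (hN ▸ sum_lowerGap_lt hp hu) (lowerGap L p)
    (fun i => zero_notMem_lowerGap hp0 (h0 i)) (fun i => (card_lowerGap i).trans (hcard i)) rfl
  exact hT.exists_of_lowerGap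

theorem statement8_general (k n : ℕ) (A : Matrix (Fin k) (Fin n) ℕ) (d : Fin k → ℕ)
    (hseq : ∃ S : Fin k → Fin n → Finset ℕ, SeqColoring A d S)
    (L : Fin k → Finset ℕ) (hL0 : ∀ i, 0 ∉ L i) (hLcard : ∀ i, (L i).card = d i) :
    ∃ T : Fin k → Fin n → Finset ℕ,
      (∀ i j, T i j ⊆ L i) ∧
      (∀ i j, (T i j).card = A i j) ∧
      (∀ i : Fin k, ∀ j j' : Fin n, j ≠ j' → Disjoint (T i j) (T i j')) ∧
      (∀ j : Fin n, ∀ i i' : Fin k, i ≠ i' → Disjoint (T i j) (T i' j)) := by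
  obtain ⟨S, hS⟩ := hseq
  obtain ⟨T, hT⟩ := hS.exists_isListColoring L hL0 hLcard
  exact ⟨T, hT.subset_list, hT.card_eq, hT.disjoint_row, hT.disjoint_col⟩

/-- **Theorem (Häggkvist, list edge-colorings).** If the bipartite multigraph encoded
by the matrix `A` admits a sequential coloring for `X`, then it can be properly
edge-colored from any lists `L i` at the vertices `x i` with `|L i| = d i`. -/
theorem statement8 (k n : ℕ) (A : Matrix (Fin k) (Fin n) ℕ) (d : Fin k → ℕ)
    (hd : ∀ i, d i = ∑ j, A i j)
    (hseq : ∃ S : Fin k → Fin n → Finset ℕ, SeqColoring A d S)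
    (L : Fin k → Finset ℕ) (hL0 : ∀ i, 0 ∉ L i) (hLcard : ∀ i, (L i).card = d i) :
    ∃ T : Fin k → Fin n → Finset ℕ,
      (∀ i j, T i j ⊆ L i) ∧
      (∀ i j, (T i j).card = A i j) ∧
      (∀ i : Fin k, ∀ j j' : Fin n, j ≠ j' → Disjoint (T i j) (T i j')) ∧
      (∀ j : Fin n, ∀ i i' : Fin k, i ≠ i' → Disjoint (T i j) (T i' j)) :=
  statement8_general k n A d hseq L hL0 hLcard
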